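/- Let K be a finite group, H a non-normal subgroup, x ∈ K of order > 2 with ⟨H, x⟩ = K, L = H ∩ x⁻¹Hx, and c = [H : L]. If x² ∈ H and S = H ∪ xL, then |S| = (1 + 1/c)|H| and (c+1)|H| ≤ |S³| ≤ (c + 2 - 1/c)|H|. -/

import Mathlib

/-!
Write `L = H ∩ x⁻¹Hx`, so that `S = H ∪ xL` has `|H| + |L|` elements as `x ∉ H`. The double coset
`HxH` is parametrized by `H × H/L`, so `|HxH| = c|H|`, and `S³ ⊇ H ∪ HxH` gives the lower bound.
Since `x² ∈ H`, we have `(xL)(xL) ⊆ H` and `(xL)H(xL) ⊆ xHx = x⁻¹Hx`, so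
`S³ ⊆ H ∪ HxH ∪ x⁻¹Hx`; as `H ∩ x⁻¹Hx = L` this set has at most `2|H| - |L| + c|H|` elements,
and `|H| = c|L|` turns both counts into the stated bounds.
-/

open Pointwise DoubleCoset

namespace Subgroup

variable {G : Type*} [Group G] {H : Subgroup G} {x : G}

theorem mem_map_conj_inv_iff {g : G} :
    g ∈ H.map (MulAut.conj x⁻¹).toMonoidHom ↔ x * g * x⁻¹ ∈ H := by
  rw [mem_map_equiv, MulAut.conj_symm_apply, inv_inv]

theorem card_mul_relIndex_of_le {L : Subgroup G} (hLH : L ≤ H) :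
    Nat.card L * L.relIndex H = Nat.card H := by
  simpa only [relIndex_bot_left] using relIndex_mul_relIndex ⊥ L H bot_le hLH

theorem notMem_of_not_normal_of_sup_zpowers_eq_top (hH : ¬H.Normal)
    (hgen : H ⊔ zpowers x = ⊤) : x ∉ H := by
  intro hx
  rw [sup_eq_left.mpr (zpowers_le.mpr hx)] at hgen
  exact hH (hgen ▸ normal_top)

variable (H x)

/-- `(h, q) ↦ h x q⁻¹` parametrizes `HxH`: `h x a⁻¹ = h' x a'⁻¹` forces `a⁻¹ a' ∈ H ∩ x⁻¹Hx`. -/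
theorem ncard_doubleCoset :
    (doubleCoset x H H).ncard =
      Nat.card H * (H ⊓ H.map (MulAut.conj x⁻¹).toMonoidHom).relIndex H := by
  set L := H ⊓ H.map (MulAut.conj x⁻¹).toMonoidHom
  let φ : H × (H ⧸ L.subgroupOf H) → G := fun p => p.1 * x * (p.2.out : G)⁻¹
  have hφ : Function.Injective φ := by
    rintro ⟨h, q⟩ ⟨h', q'⟩ heq
    have hq : q = q' := by
      rw [← q.out_eq, ← q'.out_eq, QuotientGroup.eq, mem_subgroupOf, mem_inf, mem_map_conj_inv_iff]
      refine ⟨mul_mem (inv_mem q.out.2) q'.out.2, ?_⟩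
      have heq : (h : G) * x * (q.out : G)⁻¹ = h' * x * (q'.out : G)⁻¹ := heq
      have key : x * ((q.out : G)⁻¹ * q'.out) * x⁻¹ = (h : G)⁻¹ * h' :=
        calc x * ((q.out : G)⁻¹ * q'.out) * x⁻¹
            = (h : G)⁻¹ * (h * x * (q.out : G)⁻¹) * (q'.out * x⁻¹) := by group
          _ = (h : G)⁻¹ * (h' * x * (q'.out : G)⁻¹) * (q'.out * x⁻¹) := by rw [heq]
          _ = (h : G)⁻¹ * h' := by group
      exact key ▸ mul_mem (inv_mem h.2) h'.2
    subst hq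
    exact Prod.ext (Subtype.ext (mul_right_cancel (mul_right_cancel heq))) rfl
  have hrange : Set.range φ = doubleCoset x H H := by
    ext g
    rw [mem_doubleCoset]
    constructor
    · rintro ⟨⟨h, q⟩, rfl⟩
      exact ⟨h, h.2, _, inv_mem q.out.2, rfl⟩
    · rintro ⟨a, ha, b, hb, rfl⟩
      set q : H ⧸ L.subgroupOf H := QuotientGroup.mk ⟨b, hb⟩⁻¹
      have hbq : b * q.out ∈ L := by
        simpa [mem_subgroupOf] using inv_mem (QuotientGroup.eq.mp q.out_eq)
      refine ⟨⟨⟨a * (x * (b * q.out) * x⁻¹), mul_mem ha (mem_map_conj_inv_iff.mp hbq.2)⟩, q⟩, ?_⟩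
      simp only [φ]
      group
  rw [← hrange, ← Nat.card_coe_set_eq, Nat.card_range_of_injective hφ, Nat.card_prod]
  rfl

theorem ncard_union_union_add_card_inf_le [Finite G] (K : Subgroup G) (D : Set G) :
    ((H : Set G) ∪ D ∪ K).ncard + Nat.card ↥(H ⊓ K) ≤ Nat.card H + Nat.card K + D.ncard := by
  have hHK := Set.ncard_union_add_ncard_inter (H : Set G) K
  rw [← coe_inf] at hHK
  calc ((H : Set G) ∪ D ∪ K).ncard + Nat.card ↥(H ⊓ K)
      = ((H : Set G) ∪ K ∪ D).ncard + Nat.card ↥(H ⊓ K) := by rw [Set.union_right_comm]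
    _ ≤ ((H : Set G) ∪ K).ncard + D.ncard + Nat.card ↥(H ⊓ K) := by
        gcongr; exact Set.ncard_union_le _ _
    _ = Nat.card H + Nat.card K + D.ncard := by
        simp only [← Nat.card_coe_set_eq, SetLike.coe_sort_coe] at hHK ⊢
        omega

variable {H x}

theorem disjoint_coe_doubleCoset (hx : x ∉ H) : Disjoint (H : Set G) (doubleCoset x H H) := by
  refine Set.disjoint_left.mpr fun g hg hgD ↦ ?_
  obtain ⟨a, ha, b, hb, rfl⟩ := mem_doubleCoset.mp hgD
  have e : x = a⁻¹ * (a * x * b) * b⁻¹ := by group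
  exact hx (e ▸ mul_mem (mul_mem (inv_mem ha) hg) (inv_mem hb))

theorem ncard_coe_union_singleton_mul [Finite G] {L : Subgroup G} (hx : x ∉ H) (hLH : L ≤ H) :
    ((H : Set G) ∪ {x} * L).ncard = Nat.card H + Nat.card L := by
  have hdisj : Disjoint (H : Set G) ({x} * L) := by
    rw [Set.singleton_mul, Set.disjoint_left]
    rintro _ hg ⟨l, hl, rfl⟩
    have e : x = x * l * l⁻¹ := by group
    exact hx (e ▸ mul_mem hg (inv_mem (hLH hl)))
  rw [Set.ncard_union_eq hdisj, Set.singleton_mul,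
    Set.ncard_image_of_injective _ (mul_right_injective x)]
  rfl

theorem coe_union_doubleCoset_subset_mul_mul {S : Set G} (hHS : (H : Set G) ⊆ S) (hxS : x ∈ S) :
    (H : Set G) ∪ doubleCoset x H H ⊆ S * S * S := by
  rintro g (hg | hg)
  · simpa using Set.mul_mem_mul (Set.mul_mem_mul (hHS hg) (hHS (one_mem H))) (hHS (one_mem H))
  · obtain ⟨a, ha, b, hb, rfl⟩ := mem_doubleCoset.mp hg
    exact Set.mul_mem_mul (Set.mul_mem_mul (hHS ha) hxS) (hHS hb)

theorem mul_mul_subset_union_doubleCoset_union_map_conj (hx2 : x ^ 2 ∈ H) {S : Set G}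
    (hS : S ⊆ H ∪ {x} * ↑(H ⊓ H.map (MulAut.conj x⁻¹).toMonoidHom)) :
    S * S * S ⊆ H ∪ doubleCoset x H H ∪ H.map (MulAut.conj x⁻¹).toMonoidHom := by
  have hS' : ∀ s ∈ S, s ∈ H ∨ ∃ l ∈ H, x * l * x⁻¹ ∈ H ∧ s = x * l := by
    intro s hs
    rw [Set.singleton_mul] at hS
    rcases hS hs with h | ⟨l, ⟨hl, hl'⟩, rfl⟩
    · exact .inl h
    · exact .inr ⟨l, hl, mem_map_conj_inv_iff.mp hl', rfl⟩
  have hxx : x * x ∈ H := sq x ▸ hx2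
  have hsq : ∀ l ∈ H, x * l * x⁻¹ ∈ H → ∀ l' ∈ H, x * l * (x * l') ∈ H := by
    intro l _ hc l' hl'
    have e : x * l * (x * l') = x * l * x⁻¹ * (x * x) * l' := by group
    exact e ▸ mul_mem (mul_mem hc hxx) hl'
  rintro _ ⟨_, ⟨s₁, h₁, s₂, h₂, rfl⟩, s₃, h₃, rfl⟩
  simp only [Set.mem_union, SetLike.mem_coe, mem_doubleCoset, mem_map_conj_inv_iff]
  rcases hS' s₁ h₁ with h₁ | ⟨l₁, hl₁, hc₁, rfl⟩ <;>
  rcases hS' s₂ h₂ with h₂ | ⟨l₂, hl₂, hc₂, rfl⟩ <;>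
  rcases hS' s₃ h₃ with h₃ | ⟨l₃, hl₃, hc₃, rfl⟩
  · exact .inl (.inl (mul_mem (mul_mem h₁ h₂) h₃))
  · exact .inl (.inr ⟨s₁ * s₂, mul_mem h₁ h₂, l₃, hl₃, by group⟩)
  · exact .inl (.inr ⟨s₁, h₁, l₂ * s₃, mul_mem hl₂ h₃, by group⟩)
  · exact .inl (.inl (by rw [mul_assoc]; exact mul_mem h₁ (hsq l₂ hl₂ hc₂ l₃ hl₃)))
  · exact .inl (.inr ⟨1, one_mem H, l₁ * s₂ * s₃, mul_mem (mul_mem hl₁ h₂) h₃, by group⟩)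
  · have e : x * (x * l₁ * s₂ * (x * l₃)) * x⁻¹ = x * x * (l₁ * s₂) * (x * l₃ * x⁻¹) := by group
    exact .inr (e ▸ mul_mem (mul_mem hxx (mul_mem hl₁ h₂)) hc₃)
  · exact .inl (.inl (mul_mem (hsq l₁ hl₁ hc₁ l₂ hl₂) h₃))
  · exact .inl (.inr
      ⟨x * l₁ * (x * l₂), hsq l₁ hl₁ hc₁ l₂ hl₂, l₃, hl₃, (mul_assoc _ _ _).symm⟩)

end Subgroup

theorem stmt19_general {K : Type*} [Group K] [Finite K] (H : Subgroup K) (hH : ¬ H.Normal)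
    (x : K) (hgen : H ⊔ Subgroup.zpowers x = ⊤) (hx2 : x ^ 2 ∈ H)
    (L : Subgroup K) (hL : L = H ⊓ Subgroup.map (MulAut.conj x⁻¹).toMonoidHom H)
    (c : ℕ) (hc : c = (L.subgroupOf H).index)
    (S : Set K) (hS : S = (H : Set K) ∪ {x} * (L : Set K)) :
    c * S.ncard = (c + 1) * Nat.card H ∧
    (c + 1) * Nat.card H ≤ (S * S * S).ncard ∧
    c * (S * S * S).ncard ≤ (c * c + 2 * c - 1) * Nat.card H := by
  have hx : x ∉ H := Subgroup.notMem_of_not_normal_of_sup_zpowers_eq_top hH hgen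
  have hLH : L ≤ H := hL ▸ inf_le_left
  have hLc : Nat.card L * c = Nat.card H := hc ▸ Subgroup.card_mul_relIndex_of_le hLH
  have hcard_S : S.ncard = Nat.card H + Nat.card L :=
    hS ▸ Subgroup.ncard_coe_union_singleton_mul hx hLH
  have hcard_D : (doubleCoset x H H).ncard = Nat.card H * c := by
    rw [hc, hL]; exact Subgroup.ncard_doubleCoset H x
  have hlower : Nat.card H + Nat.card H * c ≤ (S * S * S).ncard := by
    have hxS : x ∈ S := hS ▸ .inr ⟨x, rfl, 1, L.one_mem, mul_one x⟩
    have h := Set.ncard_le_ncard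
      (Subgroup.coe_union_doubleCoset_subset_mul_mul (hS ▸ Set.subset_union_left) hxS)
    rwa [Set.ncard_union_eq (Subgroup.disjoint_coe_doubleCoset hx), hcard_D] at h
  have hupper : (S * S * S).ncard + Nat.card L ≤ 2 * Nat.card H + Nat.card H * c := by
    have h₁ := Set.ncard_le_ncard
      (Subgroup.mul_mul_subset_union_doubleCoset_union_map_conj hx2 (S := S) (by rw [hS, hL]))
    have h₂ := Subgroup.ncard_union_union_add_card_inf_le H
      (H.map (MulAut.conj x⁻¹).toMonoidHom) (doubleCoset x H H)
    rw [← hL, Subgroup.card_map_of_injective (MulEquiv.injective _), hcard_D] at h₂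
    omega
  refine ⟨by rw [hcard_S, ← hLc]; ring, by linarith, ?_⟩
  rw [Nat.sub_mul, one_mul]
  apply Nat.le_sub_of_add_le
  nlinarith

theorem stmt19 {K : Type*} [Group K] [Finite K] (H : Subgroup K) (hH : ¬ H.Normal)
    (x : K) (horder : 2 < orderOf x) (hgen : H ⊔ Subgroup.zpowers x = ⊤) (hx2 : x ^ 2 ∈ H)
    (L : Subgroup K) (hL : L = H ⊓ Subgroup.map (MulAut.conj x⁻¹).toMonoidHom H)
    (c : ℕ) (hc : c = (L.subgroupOf H).index)
    (S : Set K) (hS : S = (H : Set K) ∪ {x} * (L : Set K)) :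
    c * S.ncard = (c + 1) * Nat.card H ∧
    (c + 1) * Nat.card H ≤ (S * S * S).ncard ∧
    c * (S * S * S).ncard ≤ (c * c + 2 * c - 1) * Nat.card H :=
  stmt19_general H hH x hgen hx2 L hL c hc S hS
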